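/- Assume fixed recourse (B^i = 0 for all i ∈ [n_ξ]) and let ω := max_{x∈X} rank(A(x)), where A(x) is the m×n_ξ matrix with columns A^i x − H_i; note ω ≤ min{m, n_ξ}. Then for every x ∈ X feasible for 2RO-C there exist at most Σ_{i=0}^{ω} C(η, i) convex recourse-stable regions whose closures cover U, and consequently k ≥ min{|Y|, (n_ξ+1)·Σ_{i=0}^{ω} C(η, i)} policies suffice for the k-adaptability problem to have the same optimal value and the same optimal first-stage solutions as the two-stage robust problem; if moreover g does not depend on ξ, then k ≥ min{|Y|, Σ_{i=0}^{ω} C(η, i)} suffices. -/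

import Mathlib

noncomputable section

/-- Worst-case value `sup_{ξ ∈ U} min_{y ∈ S} F(y, ξ)` with values in `ℝ ∪ {±∞}`. -/
def worstValE {Eξ Ey : Type*} (U : Set Eξ) (S : Set Ey)
    (F : Ey → Eξ → EReal) : EReal :=
  ⨆ ξ ∈ U, ⨅ y ∈ S, F y ξ

/-- The `k`-adaptability value for a fixed first stage. -/
def kValE {Eξ Ey : Type*} (U : Set Eξ) (S : Set Ey)
    (F : Ey → Eξ → EReal) (k : ℕ) : EReal :=
  ⨅ y ∈ {y : Fin k → Ey | ∀ i, y i ∈ S}, worstValE U (Set.range y) F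

variable {nx ny nξ m : ℕ}

/-- Feasibility of `(x,y)` under scenario `ξ` for the fixed-recourse constraint system
`A(ξ)x + By ≥ h(ξ)` with `h(ξ) = h + Hξ`, `A(ξ) = A + Σᵢ Aⁱξᵢ`. -/
def FeasS (hv : Fin m → ℤ) (H : Matrix (Fin m) (Fin nξ) ℤ)
    (A0 : Matrix (Fin m) (Fin nx) ℤ) (Ai : Fin nξ → Matrix (Fin m) (Fin nx) ℤ)
    (B0 : Matrix (Fin m) (Fin ny) ℤ)
    (x : Fin nx → ℝ) (y : Fin ny → ℝ) (ξ : Fin nξ → ℝ) : Prop :=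
  ∀ l, (hv l : ℝ) + ∑ i, (H l i : ℝ) * ξ i ≤
    (∑ j, ((A0 l j : ℝ) + ∑ i, ξ i * (Ai i l j : ℝ)) * x j) +
    ∑ j, (B0 l j : ℝ) * y j

open Classical in
/-- `f(x,y,ξ) = g(x,y,ξ)` if the constraints hold and `+∞` otherwise. -/
def fES (g : (Fin nx → ℝ) → (Fin ny → ℝ) → (Fin nξ → ℝ) → ℝ)
    (hv : Fin m → ℤ) (H : Matrix (Fin m) (Fin nξ) ℤ)
    (A0 : Matrix (Fin m) (Fin nx) ℤ) (Ai : Fin nξ → Matrix (Fin m) (Fin nx) ℤ)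
    (B0 : Matrix (Fin m) (Fin ny) ℤ)
    (x : Fin nx → ℝ) (y : Fin ny → ℝ) (ξ : Fin nξ → ℝ) : EReal :=
  if FeasS hv H A0 Ai B0 x y ξ then ((g x y ξ : ℝ) : EReal) else ⊤

/-- `x` is feasible for the two-stage robust problem. -/
def Feasible2RO (hv : Fin m → ℤ) (H : Matrix (Fin m) (Fin nξ) ℤ)
    (A0 : Matrix (Fin m) (Fin nx) ℤ) (Ai : Fin nξ → Matrix (Fin m) (Fin nx) ℤ)
    (B0 : Matrix (Fin m) (Fin ny) ℤ)
    (Yx : (Fin nx → ℝ) → Set (Fin ny → ℝ)) (U : Set (Fin nξ → ℝ))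
    (x : Fin nx → ℝ) : Prop :=
  ∀ ξ ∈ U, ∃ y ∈ Yx x, FeasS hv H A0 Ai B0 x y ξ

/-- A convex set `D` is recourse-stable for `x`. -/
def RecourseStableS (hv : Fin m → ℤ) (H : Matrix (Fin m) (Fin nξ) ℤ)
    (A0 : Matrix (Fin m) (Fin nx) ℤ) (Ai : Fin nξ → Matrix (Fin m) (Fin nx) ℤ)
    (B0 : Matrix (Fin m) (Fin ny) ℤ)
    (Yx : (Fin nx → ℝ) → Set (Fin ny → ℝ))
    (x : Fin nx → ℝ) (D : Set (Fin nξ → ℝ)) : Prop :=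
  ∀ y ∈ Yx x, (∀ ξ ∈ D, FeasS hv H A0 Ai B0 x y ξ) ∨
    (∀ ξ ∈ D, ¬ FeasS hv H A0 Ai B0 x y ξ)

/-- Coefficient vector `a_l(x,y)` of `ξ` in row `l` (fixed recourse). -/
def rowCoef (H : Matrix (Fin m) (Fin nξ) ℤ) (Ai : Fin nξ → Matrix (Fin m) (Fin nx) ℤ)
    (x : Fin nx → ℝ) (l : Fin m) : Fin nξ → ℝ :=
  fun i => (∑ j, (Ai i l j : ℝ) * x j) - (H l i : ℝ)

/-- The matrix `A(x)` with columns `Aⁱx − Hᵢ`. -/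
def matA (H : Matrix (Fin m) (Fin nξ) ℤ) (Ai : Fin nξ → Matrix (Fin m) (Fin nx) ℤ)
    (x : Fin nx → ℝ) : Matrix (Fin m) (Fin nξ) ℝ :=
  Matrix.of fun l i => (∑ j, (Ai i l j : ℝ) * x j) - (H l i : ℝ)

/-- Right-hand side `h_l(x,y)` of row `l`. -/
def rowRhs (hv : Fin m → ℤ) (A0 : Matrix (Fin m) (Fin nx) ℤ)
    (B0 : Matrix (Fin m) (Fin ny) ℤ)
    (x : Fin nx → ℝ) (y : Fin ny → ℝ) (l : Fin m) : ℝ :=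
  (hv l : ℝ) - (∑ j, (A0 l j : ℝ) * x j) - ∑ j, (B0 l j : ℝ) * y j

/-- The set `H(x)` of hyperplanes with nonzero normal that intersect `U`. -/
def HypSet (hv : Fin m → ℤ) (H : Matrix (Fin m) (Fin nξ) ℤ)
    (A0 : Matrix (Fin m) (Fin nx) ℤ) (Ai : Fin nξ → Matrix (Fin m) (Fin nx) ℤ)
    (B0 : Matrix (Fin m) (Fin ny) ℤ)
    (Yx : (Fin nx → ℝ) → Set (Fin ny → ℝ)) (U : Set (Fin nξ → ℝ))
    (x : Fin nx → ℝ) : Set (Set (Fin nξ → ℝ)) :=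
  {P | ∃ y ∈ Yx x, ∃ l : Fin m, rowCoef H Ai x l ≠ 0 ∧
    P = {ξ | ∑ i, rowCoef H Ai x l i * ξ i = rowRhs hv A0 B0 x y l} ∧
    (P ∩ U).Nonempty}

end


/-!
Under fixed recourse, whether a second-stage policy `y` is feasible at `ξ` only changes across the
hyperplanes of `H(x)`. The cells cut out of `U` by those hyperplanes that cross `U` are therefore
convex recourse-stable regions, dense in `U` because a convex set cannot be covered by finitely many
hyperplanes not containing it; by the deletion-restriction recursion for hyperplane arrangements
there are at most `∑_{i ≤ ω} C(η, i)` of them, `ω` bounding the rank of the normals. On each region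
the feasible policies are those feasible on the whole region, and Helly's theorem applied to the
superlevel sets of these concave objectives picks `n_ξ + 1` of them achieving the worst-case value
(one suffices when the objective ignores `ξ`). Taking all these policies shows that the
`k`-adaptability value equals the two-stage value at every `x`, which gives both claims.
-/

open Module Submodule Finset Filter Topology

theorem Convex.exists_apply_eq {E : Type*} [AddCommGroup E] [Module ℝ E] {s : Set E}
    (hs : Convex ℝ s) (f : E →ₗ[ℝ] ℝ) {x y : E} (hx : x ∈ s) (hy : y ∈ s) {r : ℝ}
    (hxr : f x ≤ r) (hry : r ≤ f y) : ∃ z ∈ s, f z = r :=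
  (hs.linear_image f).ordConnected.out ⟨x, hx, rfl⟩ ⟨y, hy, rfl⟩ ⟨hxr, hry⟩

theorem sum_range_choose_succ_succ (n r : ℕ) :
    ∑ i ∈ range (r + 2), (n + 1).choose i =
      ∑ i ∈ range (r + 2), n.choose i + ∑ i ∈ range (r + 1), n.choose i := by
  rw [sum_range_succ' (fun i => (n + 1).choose i), sum_range_succ' (fun i => n.choose i)]
  simp only [Nat.choose_succ_succ, Nat.choose_zero_right, sum_add_distrib]
  ring

theorem Submodule.finrank_map_lt_of_mem_ker {V W : Type*} [AddCommGroup V] [Module ℝ V]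
    [AddCommGroup W] [Module ℝ W] {Q : Submodule ℝ V} [FiniteDimensional ℝ Q] (ρ : V →ₗ[ℝ] W)
    {v : V} (hvQ : v ∈ Q) (hv : v ≠ 0) (hρv : ρ v = 0) :
    finrank ℝ (Q.map ρ) < finrank ℝ Q := by
  have hker : LinearMap.ker (ρ.domRestrict Q) ≠ ⊥ :=
    (Submodule.ne_bot_iff _).2 ⟨⟨v, hvQ⟩, by simpa using hρv, by simpa using hv⟩
  have := (ρ.domRestrict Q).finrank_range_add_finrank_ker
  rw [LinearMap.range_domRestrict] at this
  have := Submodule.finrank_eq_zero.not.2 hker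
  omega

theorem LinearMap.eventually_apply_add_smul_sub_ne {E : Type*} [AddCommGroup E] [Module ℝ E]
    (f : E →ₗ[ℝ] ℝ) {ξ u : E} {r : ℝ} (h : f ξ ≠ r ∨ f u ≠ r) :
    ∀ᶠ t in 𝓝[>] (0 : ℝ), f (ξ + t • (u - ξ)) ≠ r := by
  have hf : ∀ t : ℝ, f (ξ + t • (u - ξ)) - r = (f ξ - r) + t * (f u - f ξ) := fun t => by
    simp only [map_add, map_smul, map_sub, smul_eq_mul]; ring
  have : ∀ t : ℝ, f (ξ + t • (u - ξ)) ≠ r ↔ (f ξ - r) + t * (f u - f ξ) ≠ 0 := fun t => by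
    rw [← hf, sub_ne_zero]
  simp only [this]
  by_cases hξ : f ξ = r
  · filter_upwards [self_mem_nhdsWithin] with t (ht : 0 < t)
    simp only [hξ, sub_self, zero_add]
    exact mul_ne_zero ht.ne' (by simpa [hξ, sub_ne_zero] using h)
  · have hcont : Continuous fun t : ℝ => (f ξ - r) + t * (f u - f ξ) := by fun_prop
    exact nhdsWithin_le_nhds (hcont.continuousAt.eventually_ne (by simpa [sub_ne_zero] using hξ))

namespace HyperplaneArrangement

variable {ι E : Type*} [AddCommGroup E] [Module ℝ E]

noncomputable def rank (a : ι → Dual ℝ E) (T : Finset ι) : ℕ :=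
  finrank ℝ (span ℝ (a '' T))

/-- The open cell of the arrangement `{a j = c j}`, `j ∈ T`, lying on the positive side of exactly
the hyperplanes indexed by `S`. -/
def cell [DecidableEq ι] (a : ι → Dual ℝ E) (c : ι → ℝ) (T S : Finset ι) : Set E :=
  {ξ | ∀ j ∈ T, if j ∈ S then c j < a j ξ else a j ξ < c j}

def patterns [DecidableEq ι] (a : ι → Dual ℝ E) (c : ι → ℝ) (T : Finset ι) :
    Set (Finset ι) :=
  {S | S ⊆ T ∧ (cell a c T S).Nonempty}

/-- The patterns of `T` whose cell is cut in two by the hyperplane `a j₀ = c j₀`. -/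
def cutPatterns [DecidableEq ι] (a : ι → Dual ℝ E) (c : ι → ℝ) (T : Finset ι) (j₀ : ι) :
    Set (Finset ι) :=
  {S | S ⊆ T ∧ (cell a c (insert j₀ T) S).Nonempty ∧
    (cell a c (insert j₀ T) (insert j₀ S)).Nonempty}

variable (a : ι → Dual ℝ E)

theorem rank_mono {T T' : Finset ι} (h : T ⊆ T') : rank a T ≤ rank a T' :=
  have : FiniteDimensional ℝ (span ℝ (a '' T')) :=
    FiniteDimensional.span_of_finite ℝ (T'.finite_toSet.image a)
  Submodule.finrank_mono (span_mono (Set.image_mono (coe_subset.2 h)))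

theorem rank_dotProductEquiv_le {m n : Type*} [Finite m] [Fintype n] [DecidableEq n]
    (A : Matrix m n ℝ) {v : ι → n → ℝ} {T : Finset ι} (hv : ∀ j ∈ T, v j ∈ Set.range A) :
    rank (fun j => dotProductEquiv ℝ n (v j)) T ≤ A.rank := by
  rw [rank, ← Set.image_image (dotProductEquiv ℝ n) v, ← LinearEquiv.coe_toLinearMap,
    span_image, LinearEquiv.finrank_map_eq, Matrix.rank_eq_finrank_span_row]
  exact Submodule.finrank_mono (span_mono (Set.image_subset_iff.2 hv))

variable [DecidableEq ι] (c : ι → ℝ)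

theorem rank_restrict_lt {T : Finset ι} {j₀ : ι} (ha : a j₀ ≠ 0) :
    rank (fun j => (LinearMap.ker (a j₀)).subtype.dualMap (a j)) T < rank a (insert j₀ T) := by
  set ρ := (LinearMap.ker (a j₀)).subtype.dualMap
  have : FiniteDimensional ℝ (span ℝ (a '' ↑(insert j₀ T))) :=
    FiniteDimensional.span_of_finite ℝ ((insert j₀ T).finite_toSet.image a)
  calc rank (fun j => ρ (a j)) T = finrank ℝ ((span ℝ (a '' T)).map ρ) := by
        rw [rank, ← Set.image_image, Submodule.span_image]
    _ ≤ finrank ℝ ((span ℝ (a '' ↑(insert j₀ T))).map ρ) :=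
        Submodule.finrank_mono
          (map_mono (span_mono (Set.image_mono (coe_subset.2 (subset_insert _ _)))))
    _ < rank a (insert j₀ T) :=
        (span ℝ _).finrank_map_lt_of_mem_ker ρ (subset_span ⟨j₀, by simp, rfl⟩) ha
          (LinearMap.ext fun v => v.2)

theorem convex_cell (T S : Finset ι) : Convex ℝ (cell a c T S) := by
  have : cell a c T S = ⋂ j ∈ T, {ξ | if j ∈ S then c j < a j ξ else a j ξ < c j} := by
    ext; simp [cell]
  rw [this]
  refine convex_iInter₂ fun j _ => ?_
  split_ifs
  · exact convex_halfSpace_gt (a j).isLinear _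
  · exact convex_halfSpace_lt (a j).isLinear _

theorem cell_subset_cell {T T' S S' : Finset ι} (hT : T' ⊆ T) (hS : ∀ j ∈ T', j ∈ S' ↔ j ∈ S) :
    cell a c T S ⊆ cell a c T' S' := fun ξ hξ j hj => by
  simpa only [hS j hj] using hξ j (hT hj)

theorem patterns_finite (T : Finset ι) : (patterns a c T).Finite :=
  T.powerset.finite_toSet.subset fun _ hS => mem_powerset.2 hS.1

theorem mem_cell_filter {T : Finset ι} {ξ : E} (hξ : ∀ j ∈ T, a j ξ ≠ c j) :
    ξ ∈ cell a c T {j ∈ T | c j < a j ξ} := fun j hj => by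
  by_cases h : c j < a j ξ
  · simp [hj, h]
  · simpa [hj, h] using lt_of_le_of_ne (not_lt.1 h) (hξ j hj)

theorem patterns_empty : (patterns a c ∅).ncard ≤ 1 := by
  refine (Set.ncard_le_ncard (t := {∅}) (fun S hS => ?_)).trans (Set.ncard_singleton _).le
  exact subset_empty.1 hS.1

/-- Deletion: erasing `j₀` maps the patterns of `insert j₀ T` onto patterns of `T`, and only the
cut patterns have two preimages. -/
theorem ncard_patterns_insert_le {T : Finset ι} {j₀ : ι} (hj₀ : j₀ ∉ T) :
    (patterns a c (insert j₀ T)).ncard ≤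
      (patterns a c T).ncard + (cutPatterns a c T j₀).ncard := by
  set N := {S | S ⊆ T ∧ (cell a c (insert j₀ T) S).Nonempty}
  set P := {S | S ⊆ T ∧ (cell a c (insert j₀ T) (insert j₀ S)).Nonempty}
  have hfin : (patterns a c T).Finite := patterns_finite a c T
  have hN : N ⊆ patterns a c T := fun S hS =>
    ⟨hS.1, hS.2.mono (cell_subset_cell a c (subset_insert _ _) fun _ _ => Iff.rfl)⟩
  have hP : P ⊆ patterns a c T := fun S hS =>
    ⟨hS.1, hS.2.mono (cell_subset_cell a c (subset_insert _ _) fun j hj => by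
      simp [ne_of_mem_of_not_mem hj hj₀])⟩
  have hcover : patterns a c (insert j₀ T) ⊆ N ∪ insert j₀ '' P := by
    rintro S ⟨hST, hS⟩
    by_cases hj : j₀ ∈ S
    · refine Or.inr ⟨S.erase j₀, ⟨fun j hj' => ?_, by rwa [insert_erase hj]⟩, insert_erase hj⟩
      exact (mem_insert.1 (hST (mem_of_mem_erase hj'))).resolve_left (ne_of_mem_erase hj')
    · exact Or.inl ⟨fun j hj' => (mem_insert.1 (hST hj')).resolve_left
        (ne_of_mem_of_not_mem hj' hj), hS⟩
  have hNP : N ∩ P = cutPatterns a c T j₀ :=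
    Set.ext fun _ => ⟨fun ⟨⟨hS, h₁⟩, _, h₂⟩ => ⟨hS, h₁, h₂⟩, fun ⟨hS, h₁, h₂⟩ => ⟨⟨hS, h₁⟩, hS, h₂⟩⟩
  calc (patterns a c (insert j₀ T)).ncard ≤ (N ∪ insert j₀ '' P).ncard :=
        Set.ncard_le_ncard hcover ((hfin.subset hN).union ((hfin.subset hP).image _))
    _ ≤ N.ncard + P.ncard := (Set.ncard_union_le _ _).trans
        (Nat.add_le_add_left (Set.ncard_image_le (hfin.subset hP)) _)
    _ = (N ∪ P).ncard + (N ∩ P).ncard :=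
        (Set.ncard_union_add_ncard_inter _ _ (hfin.subset hN) (hfin.subset hP)).symm
    _ ≤ (patterns a c T).ncard + (cutPatterns a c T j₀).ncard :=
        hNP ▸ Nat.add_le_add_right (Set.ncard_le_ncard (Set.union_subset hN hP) hfin) _

theorem exists_mem_cell_apply_eq {T S : Finset ι} {j₀ : ι} (hj₀ : j₀ ∉ T)
    (hS : S ∈ cutPatterns a c T j₀) : a j₀ ≠ 0 ∧ ∃ w ∈ cell a c T S, a j₀ w = c j₀ := by
  obtain ⟨hST, ⟨ξ₁, h₁⟩, ⟨ξ₂, h₂⟩⟩ := hS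
  have hj₀S : j₀ ∉ S := fun h => hj₀ (hST h)
  have h₁j₀ : a j₀ ξ₁ < c j₀ := by simpa [hj₀S] using h₁ j₀ (mem_insert_self _ _)
  have h₂j₀ : c j₀ < a j₀ ξ₂ := by simpa using h₂ j₀ (mem_insert_self _ _)
  refine ⟨fun h => by simp [h] at h₁j₀ h₂j₀; linarith, ?_⟩
  exact (convex_cell a c T S).exists_apply_eq (a j₀)
    (cell_subset_cell a c (subset_insert _ _) (fun _ _ => Iff.rfl) h₁)
    (cell_subset_cell a c (subset_insert _ _)
      (fun j hj => by simp [ne_of_mem_of_not_mem hj hj₀]) h₂) h₁j₀.le h₂j₀.le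

/-- Restriction: a cut pattern is a pattern of the arrangement induced on the hyperplane
`a j₀ = c j₀`, parametrised by `ker (a j₀)` through `p₀`. -/
theorem cutPatterns_subset_patterns_restrict {T : Finset ι} {j₀ : ι} (hj₀ : j₀ ∉ T) {p₀ : E}
    (hp₀ : a j₀ p₀ = c j₀) :
    cutPatterns a c T j₀ ⊆ patterns (fun j => (LinearMap.ker (a j₀)).subtype.dualMap (a j))
      (fun j => c j - a j p₀) T := fun S hS => by
  obtain ⟨-, w, hw, hwj₀⟩ := exists_mem_cell_apply_eq a c hj₀ hS
  exact ⟨hS.1, ⟨w - p₀, by simp [hwj₀, hp₀]⟩, fun j hj => by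
    simpa [LinearMap.dualMap_apply] using hw j hj⟩

theorem ncard_patterns_le (T : Finset ι) {r : ℕ} (hr : rank a T ≤ r) :
    (patterns a c T).ncard ≤ ∑ i ∈ range (r + 1), T.card.choose i := by
  induction T using Finset.induction_on generalizing E c r with
  | empty => simpa [sum_range_succ'] using patterns_empty a c
  | insert j₀ T hj₀ ih =>
    rw [card_insert_of_notMem hj₀]
    have hrT := ih a c ((rank_mono a (subset_insert j₀ T)).trans hr)
    refine (ncard_patterns_insert_le a c hj₀).trans ?_
    rcases (cutPatterns a c T j₀).eq_empty_or_nonempty with h | ⟨S₀, hS₀⟩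
    · rw [h, Set.ncard_empty, add_zero]
      exact hrT.trans (sum_le_sum fun i _ => Nat.choose_le_choose i (Nat.le_succ _))
    obtain ⟨ha, p₀, -, hp₀⟩ := exists_mem_cell_apply_eq a c hj₀ hS₀
    have hrestrict := rank_restrict_lt a (T := T) ha
    obtain ⟨r, rfl⟩ : ∃ r', r = r' + 1 := ⟨r - 1, by omega⟩
    have hcut := ih (fun j => (LinearMap.ker (a j₀)).subtype.dualMap (a j))
      (fun j => c j - a j p₀) (r := r) (by omega)
    calc _ ≤ ∑ i ∈ range (r + 2), T.card.choose i + ∑ i ∈ range (r + 1), T.card.choose i :=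
          Nat.add_le_add hrT ((Set.ncard_le_ncard (cutPatterns_subset_patterns_restrict a c hj₀ hp₀)
            (patterns_finite _ _ T)).trans hcut)
      _ = _ := (sum_range_choose_succ_succ _ _).symm

theorem apply_ne_of_mem_cell {T S : Finset ι} {ξ : E} (hξ : ξ ∈ cell a c T S) {j : ι}
    (hj : j ∈ T) : a j ξ ≠ c j := by
  have := hξ j hj
  split_ifs at this
  exacts [this.ne', this.ne]

theorem exists_mem_forall_apply_ne {U : Set E} (hU : Convex ℝ U) (hUne : U.Nonempty)
    (T : Finset ι) (hT : ∀ j ∈ T, ∃ w ∈ U, a j w ≠ c j) : ∃ u ∈ U, ∀ j ∈ T, a j u ≠ c j := by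
  induction T using Finset.induction_on with
  | empty => exact hUne.imp fun u hu => ⟨hu, by simp⟩
  | insert j₀ T _ ih =>
    obtain ⟨u, hu, huT⟩ := ih fun j hj => hT j (mem_insert_of_mem hj)
    obtain ⟨w, hw, hwj₀⟩ := hT j₀ (mem_insert_self _ _)
    have hgood : ∀ j ∈ insert j₀ T, ∀ᶠ t in 𝓝[>] (0 : ℝ), a j (u + t • (w - u)) ≠ c j :=
      fun j hj => (a j).eventually_apply_add_smul_sub_ne <| by
        rcases mem_insert.1 hj with rfl | hj
        exacts [Or.inr hwj₀, Or.inl (huT j hj)]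
    obtain ⟨t, htj, ht⟩ := (((eventually_all_finset _).2 hgood).and
      (Ioo_mem_nhdsGT one_pos)).exists
    exact ⟨_, hU.add_smul_sub_mem hu hw (Set.Ioo_subset_Icc_self ht), htj⟩

variable [TopologicalSpace E] [IsTopologicalAddGroup E] [ContinuousSMul ℝ E]

theorem subset_closure_forall_apply_ne {U : Set E} (hU : Convex ℝ U) {T : Finset ι}
    (hT : ∀ j ∈ T, ∃ w ∈ U, a j w ≠ c j) : U ⊆ closure {ξ ∈ U | ∀ j ∈ T, a j ξ ≠ c j} := by
  intro ξ hξ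
  obtain ⟨u, hu, huT⟩ := exists_mem_forall_apply_ne a c hU ⟨ξ, hξ⟩ T hT
  have hlim : Tendsto (fun t : ℝ => ξ + t • (u - ξ)) (𝓝[>] 0) (𝓝 ξ) := by
    refine tendsto_nhdsWithin_of_tendsto_nhds ?_
    exact (by fun_prop : Continuous fun t : ℝ => ξ + t • (u - ξ)).tendsto' 0 ξ (by simp)
  refine mem_closure_of_tendsto hlim ?_
  filter_upwards [Ioo_mem_nhdsGT one_pos, (eventually_all_finset _).2
    fun j hj => (a j).eventually_apply_add_smul_sub_ne (Or.inr (huT j hj))] with t ht htT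
  exact ⟨hU.add_smul_sub_mem hξ hu (Set.Ioo_subset_Icc_self ht), htT⟩

theorem exists_convex_cover {U : Set E} (hU : Convex ℝ U) (hUc : IsClosed U) {T : Finset ι}
    (hT : ∀ j ∈ T, ∃ w ∈ U, a j w ≠ c j) :
    ∃ (R : ℕ) (D : Fin R → Set E),
      (∀ t, D t ⊆ U ∧ Convex ℝ (D t) ∧ ∀ j ∈ T, ∀ ξ ∈ D t, a j ξ ≠ c j) ∧
      (⋃ t, closure (D t)) = U ∧ R ≤ (patterns a c T).ncard := by
  set F := (patterns_finite a c T).toFinset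
  refine ⟨F.card, fun t => U ∩ cell a c T (F.equivFin.symm t), fun t =>
    ⟨Set.inter_subset_left, hU.inter (convex_cell a c T _), fun j hj ξ hξ =>
      apply_ne_of_mem_cell a c hξ.2 hj⟩, ?_, (Set.ncard_eq_toFinset_card _ _).ge⟩
  refine (Set.iUnion_subset fun t => closure_minimal Set.inter_subset_left hUc).antisymm ?_
  refine (subset_closure_forall_apply_ne a c hU hT).trans ?_
  rw [← closure_iUnion_of_finite]
  refine closure_mono fun ξ ⟨hξ, hξT⟩ => ?_
  have hS : {j ∈ T | c j < a j ξ} ∈ F := (Set.Finite.mem_toFinset _).2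
    ⟨filter_subset _ _, ξ, mem_cell_filter a c hξT⟩
  exact Set.mem_iUnion.2 ⟨F.equivFin ⟨_, hS⟩, hξ, by simpa using mem_cell_filter a c hξT⟩

end HyperplaneArrangement

section AdaptabilityValues

variable {Eξ Ey : Type*} {U : Set Eξ} {S S' : Set Ey} {F : Ey → Eξ → EReal}

theorem worstValE_anti (h : S ⊆ S') : worstValE U S' F ≤ worstValE U S F :=
  iSup₂_mono fun _ _ => biInf_mono h

theorem worstValE_le_of_forall_exists {v : EReal} (h : ∀ ξ ∈ U, ∃ y ∈ S, F y ξ ≤ v) :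
    worstValE U S F ≤ v :=
  iSup₂_le fun ξ hξ => let ⟨y, hy, hyv⟩ := h ξ hξ; (iInf₂_le y hy).trans hyv

theorem worstValE_le_kValE (k : ℕ) : worstValE U S F ≤ kValE U S F k :=
  le_iInf₂ fun _ hy => worstValE_anti (Set.range_subset_iff.2 hy)

theorem kValE_le_worstValE {y₀ : Ey} (hy₀ : y₀ ∈ S) {G : Finset Ey} (hG : ↑G ⊆ S) {k : ℕ}
    (hk : G.card ≤ k) : kValE U S F k ≤ worstValE U G F := by
  let y : Fin k → Ey := fun i => G.toList.getD i y₀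
  have hyS : ∀ i, y i ∈ S := fun i => by
    by_cases hi : (i : ℕ) < G.toList.length
    · change G.toList.getD i y₀ ∈ S
      rw [List.getD_eq_getElem _ _ hi]
      exact hG (mem_toList.1 (List.getElem_mem hi))
    · change G.toList.getD i y₀ ∈ S
      rwa [List.getD_eq_default _ _ (not_lt.1 hi)]
  have hGy : (G : Set Ey) ⊆ Set.range y := fun z hz => by
    obtain ⟨n, hn, rfl⟩ := List.mem_iff_getElem.1 (mem_toList.2 hz)
    exact ⟨⟨n, hn.trans_le ((length_toList G).trans_le hk)⟩, List.getD_eq_getElem _ _ hn⟩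
  exact (iInf₂_le y hyS).trans (worstValE_anti hGy)

theorem iInf₂_eq_and_iff_of_forall_eq {α β : Type*} [CompleteLattice β] {X : Set α}
    {p q : α → β} (h : ∀ x ∈ X, p x = q x) :
    (⨅ x ∈ X, p x) = (⨅ x ∈ X, q x) ∧
      ∀ x ∈ X, (p x = ⨅ x' ∈ X, p x' ↔ q x = ⨅ x' ∈ X, q x') := by
  have e : (⨅ x ∈ X, p x) = ⨅ x ∈ X, q x := iInf_congr fun x => iInf_congr (h x)
  exact ⟨e, fun x hx => by rw [h x hx, e]⟩

end AdaptabilityValues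

/-- Otherwise Helly's theorem gives a common point of the convex sets `{ξ ∈ K | v < φ b ξ}`. -/
theorem exists_subcover_card_le_of_concaveOn {E β : Type*} [AddCommGroup E]
    [Module ℝ E] [FiniteDimensional ℝ E] {K : Set E} {s : Finset β}
    {φ : β → E → ℝ} (hφ : ∀ b ∈ s, ConcaveOn ℝ K (φ b)) {v : ℝ}
    (hv : ∀ ξ ∈ K, ∃ b ∈ s, φ b ξ ≤ v) :
    ∃ t ⊆ s, t.card ≤ Module.finrank ℝ E + 1 ∧ ∀ ξ ∈ K, ∃ b ∈ t, φ b ξ ≤ v := by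
  by_contra! h
  obtain ⟨ξ₀, hξ₀, -⟩ := h ∅ (empty_subset s) (by simp)
  obtain ⟨b₀, hb₀, -⟩ := hv ξ₀ hξ₀
  obtain ⟨ξ, hξ⟩ := Convex.helly_theorem' (F := fun b => {ξ ∈ K | v < φ b ξ}) (s := s)
    (fun b hb => (hφ b hb).convex_gt v) fun t hts ht => by
      obtain ⟨ξ, hξ, hξt⟩ := h t hts ht
      exact ⟨ξ, Set.mem_iInter₂.2 fun b hb => ⟨hξ, hξt b hb⟩⟩
  have hξ := Set.mem_iInter₂.1 hξ
  obtain ⟨b, hb, hbv⟩ := hv ξ (hξ b₀ hb₀).1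
  exact (hξ b hb).2.not_ge hbv

section FixedRecourse

variable {nx ny nξ m : ℕ} (hv : Fin m → ℤ) (H : Matrix (Fin m) (Fin nξ) ℤ)
  (A0 : Matrix (Fin m) (Fin nx) ℤ) (Ai : Fin nξ → Matrix (Fin m) (Fin nx) ℤ)
  (B0 : Matrix (Fin m) (Fin ny) ℤ) (Yx : (Fin nx → ℝ) → Set (Fin ny → ℝ)) (x : Fin nx → ℝ)

theorem feasS_iff (y : Fin ny → ℝ) (ξ : Fin nξ → ℝ) :
    FeasS hv H A0 Ai B0 x y ξ ↔ ∀ l, rowRhs hv A0 B0 x y l ≤ rowCoef H Ai x l ⬝ᵥ ξ := by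
  refine forall_congr' fun l => ?_
  have : ∑ j, ((A0 l j : ℝ) + ∑ i, ξ i * (Ai i l j : ℝ)) * x j =
      ∑ j, (A0 l j : ℝ) * x j + ∑ i, (∑ j, (Ai i l j : ℝ) * x j) * ξ i := by
    simp only [add_mul, sum_add_distrib, sum_mul]
    rw [sum_comm]
    simp only [mul_comm, mul_left_comm]
  simp only [rowRhs, rowCoef, dotProduct, sub_mul, sum_sub_distrib, this]
  constructor <;> intro h <;> linarith

theorem isClosed_setOf_feasS (y : Fin ny → ℝ) :
    IsClosed {ξ | FeasS hv H A0 Ai B0 x y ξ} := by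
  simp only [feasS_iff, Set.ofPred_forall]
  exact isClosed_iInter fun l => isClosed_le continuous_const (by fun_prop)

theorem hypSet_finite (U : Set (Fin nξ → ℝ)) (hYx : (Yx x).Finite) :
    (HypSet hv H A0 Ai B0 Yx U x).Finite := by
  refine ((hYx.prod (Set.finite_univ (α := Fin m))).image fun p =>
    {ξ | ∑ i, rowCoef H Ai x p.2 i * ξ i = rowRhs hv A0 B0 x p.1 p.2}).subset ?_
  rintro _ ⟨y, hy, l, -, rfl, -⟩
  exact ⟨(y, l), ⟨hy, Set.mem_univ l⟩, rfl⟩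

/-- A constraint changing status inside the convex set `D` vanishes at some point of `D`, which lies
on a hyperplane of `H(x)`. -/
theorem recourseStableS_of_disjoint {U D : Set (Fin nξ → ℝ)} (hDU : D ⊆ U) (hD : Convex ℝ D)
    (hDP : ∀ P ∈ HypSet hv H A0 Ai B0 Yx U x, ¬ U ⊆ P → Disjoint D P) :
    RecourseStableS hv H A0 Ai B0 Yx x D := by
  intro y hy
  by_contra! h
  obtain ⟨⟨ξ', hξ', hinfeas⟩, ⟨ξ, hξ, hfeas⟩⟩ := h
  simp only [feasS_iff, not_forall, not_le] at hfeas hinfeas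
  obtain ⟨l, hl⟩ := hinfeas
  obtain ⟨ζ, hζ, hζl⟩ := hD.exists_apply_eq (dotProductEquiv ℝ (Fin nξ) (rowCoef H Ai x l))
    hξ' hξ (by simpa using hl.le) (by simpa using hfeas l)
  have hl0 : rowCoef H Ai x l ≠ 0 := fun h0 => by
    have := hfeas l
    simp only [h0, zero_dotProduct] at hl this
    linarith
  set P : Set (Fin nξ → ℝ) := {ξ | ∑ i, rowCoef H Ai x l i * ξ i = rowRhs hv A0 B0 x y l}
  have hζP : ζ ∈ P := by
    simp only [dotProductEquiv_apply_apply, dotProduct] at hζl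
    exact hζl
  have hP : P ∈ HypSet hv H A0 Ai B0 Yx U x := ⟨y, hy, l, hl0, rfl, ζ, hζP, hDU hζ⟩
  by_cases hUP : U ⊆ P
  · exact hl.ne (hUP (hDU hξ'))
  · exact Set.disjoint_left.1 (hDP P hP hUP) hζ hζP

/-- The regions are the cells cut out of `U` by the hyperplanes of `H(x)` not containing `U`. -/
theorem exists_recourseStable_cover {U : Set (Fin nξ → ℝ)} (hUconv : Convex ℝ U)
    (hUc : IsClosed U) (hYx : (Yx x).Finite) {η ω : ℕ}
    (hη : (HypSet hv H A0 Ai B0 Yx U x).ncard ≤ η) (hω : (matA H Ai x).rank ≤ ω) :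
    ∃ (R : ℕ) (D : Fin R → Set (Fin nξ → ℝ)),
      (∀ t, D t ⊆ U ∧ Convex ℝ (D t) ∧ RecourseStableS hv H A0 Ai B0 Yx x (D t)) ∧
      (⋃ t, closure (D t)) = U ∧ R ≤ ∑ i ∈ Finset.range (ω + 1), Nat.choose η i := by
  classical
  have hfin := hypSet_finite hv H A0 Ai B0 Yx x U hYx
  have hrep : ∀ P ∈ HypSet hv H A0 Ai B0 Yx U x,
      ∃ a ∈ Set.range (matA H Ai x), ∃ r : ℝ, P = {ξ | a ⬝ᵥ ξ = r} := by
    rintro _ ⟨y, -, l, -, rfl, -⟩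
    exact ⟨_, ⟨l, rfl⟩, _, rfl⟩
  choose! a ha r hP using hrep
  set T := {P ∈ hfin.toFinset | ¬ U ⊆ P}
  have hT : ∀ P, P ∈ T ↔ P ∈ HypSet hv H A0 Ai B0 Yx U x ∧ ¬ U ⊆ P := by simp [T]
  obtain ⟨R, D, hD, hcover, hR⟩ := HyperplaneArrangement.exists_convex_cover
    (fun P => dotProductEquiv ℝ (Fin nξ) (a P)) r hUconv hUc (T := T) fun P hPT => by
      obtain ⟨hPH, hUP⟩ := (hT P).1 hPT
      obtain ⟨w, hwU, hwP⟩ := Set.not_subset.1 hUP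
      rw [hP P hPH] at hwP
      exact ⟨w, hwU, by simpa using hwP⟩
  refine ⟨R, D, fun t => ⟨(hD t).1, (hD t).2.1, ?_⟩, hcover, ?_⟩
  · refine recourseStableS_of_disjoint hv H A0 Ai B0 Yx x (hD t).1 (hD t).2.1 fun P hPH hUP => ?_
    refine Set.disjoint_left.2 fun ξ hξ hξP => (hD t).2.2 P ((hT P).2 ⟨hPH, hUP⟩) ξ hξ ?_
    rw [hP P hPH] at hξP
    simpa using hξP
  have hTη : T.card ≤ η :=
    (card_filter_le _ _).trans ((Set.ncard_eq_toFinset_card _ hfin).symm.trans_le hη)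
  calc R ≤ ∑ i ∈ range (ω + 1), T.card.choose i :=
        hR.trans (HyperplaneArrangement.ncard_patterns_le _ r T
          ((HyperplaneArrangement.rank_dotProductEquiv_le (matA H Ai x) fun P hPT =>
            ha P ((hT P).1 hPT).1).trans hω))
    _ ≤ ∑ i ∈ range (ω + 1), η.choose i := sum_le_sum fun i _ => Nat.choose_le_choose i hTη

end FixedRecourse

section Selection

variable {nx ny nξ m : ℕ} {g : (Fin nx → ℝ) → (Fin ny → ℝ) → (Fin nξ → ℝ) → ℝ}
  {hv : Fin m → ℤ} {H : Matrix (Fin m) (Fin nξ) ℤ} {A0 : Matrix (Fin m) (Fin nx) ℤ}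
  {Ai : Fin nξ → Matrix (Fin m) (Fin nx) ℤ} {B0 : Matrix (Fin m) (Fin ny) ℤ}
  {Yx : (Fin nx → ℝ) → Set (Fin ny → ℝ)} {U D : Set (Fin nξ → ℝ)} {x : Fin nx → ℝ}

theorem fES_of_feasS {y : Fin ny → ℝ} {ξ : Fin nξ → ℝ} (h : FeasS hv H A0 Ai B0 x y ξ) :
    fES g hv H A0 Ai B0 x y ξ = g x y ξ := by
  rw [fES, if_pos h]

theorem worstValE_eq_top_of_not_feasible (hx : ¬ Feasible2RO hv H A0 Ai B0 Yx U x) :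
    worstValE U (Yx x) (fES g hv H A0 Ai B0 x) = ⊤ := by
  simp only [Feasible2RO, not_forall, not_exists, not_and] at hx
  obtain ⟨ξ, hξ, hinf⟩ := hx
  refine top_le_iff.1 (le_iSup₂_of_le ξ hξ (le_iInf₂ fun y hy => ?_))
  rw [fES, if_neg (hinf y hy)]

/-- Policies infeasible somewhere on a recourse-stable `D` cost `⊤` everywhere on `D`. -/
theorem le_worstValE_of_recourseStable (hDU : D ⊆ U)
    (hDs : RecourseStableS hv H A0 Ai B0 Yx x D) {ξ : Fin nξ → ℝ} (hξ : ξ ∈ D) {r : ℝ}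
    (hr : ∀ y ∈ Yx x, (∀ ζ ∈ D, FeasS hv H A0 Ai B0 x y ζ) → r ≤ g x y ξ) :
    (r : EReal) ≤ worstValE U (Yx x) (fES g hv H A0 Ai B0 x) := by
  refine le_iSup₂_of_le ξ (hDU hξ) (le_iInf₂ fun y hy => ?_)
  rcases hDs y hy with hall | hnone
  · rw [fES_of_feasS (hall ξ hξ)]
    exact EReal.coe_le_coe_iff.2 (hr y hy hall)
  · rw [fES, if_neg (hnone ξ hξ)]
    exact le_top

theorem exists_finset_feasible_on (hS : (Yx x).Finite) (hx : Feasible2RO hv H A0 Ai B0 Yx U x)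
    (hDU : D ⊆ U) (hDs : RecourseStableS hv H A0 Ai B0 Yx x D) {ξ₀ : Fin nξ → ℝ} (hξ₀ : ξ₀ ∈ D) :
    ∃ F : Finset (Fin ny → ℝ), F.Nonempty ∧
      ∀ y, y ∈ F ↔ y ∈ Yx x ∧ ∀ ζ ∈ D, FeasS hv H A0 Ai B0 x y ζ := by
  classical
  refine ⟨(hS.subset (Set.sep_subset (Yx x) fun y => ∀ ζ ∈ D, FeasS hv H A0 Ai B0 x y ζ)).toFinset,
    ?_, fun y => by simp⟩
  obtain ⟨y, hy, hfeas⟩ := hx ξ₀ (hDU hξ₀)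
  rcases hDs y hy with hall | hnone
  · exact ⟨y, (Set.Finite.mem_toFinset _).2 ⟨hy, hall⟩⟩
  · exact absurd hfeas (hnone ξ₀ hξ₀)

theorem exists_policies_of_recourseStable (hS : (Yx x).Finite)
    (hx : Feasible2RO hv H A0 Ai B0 Yx U x) (hU : IsCompact U) (hcont : ∀ y, Continuous (g x y))
    (hconc : ∀ y ∈ Yx x, ConcaveOn ℝ U (g x y)) (hDU : D ⊆ U) (hD : Convex ℝ D)
    (hDs : RecourseStableS hv H A0 Ai B0 Yx x D) :
    ∃ G : Finset (Fin ny → ℝ), ↑G ⊆ Yx x ∧ G.card ≤ nξ + 1 ∧ ∀ ξ ∈ closure D,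
      ∃ y ∈ G, fES g hv H A0 Ai B0 x y ξ ≤ worstValE U (Yx x) (fES g hv H A0 Ai B0 x) := by
  rcases D.eq_empty_or_nonempty with rfl | ⟨ξ₀, hξ₀⟩
  · exact ⟨∅, by simp, by simp, by simp⟩
  obtain ⟨F, hF, hFD⟩ := exists_finset_feasible_on hS hx hDU hDs hξ₀
  set h := fun ξ => F.inf' hF (g x · ξ)
  have hh : Continuous h := Continuous.finset_inf'_apply hF fun y _ => hcont y
  have hcl : closure D ⊆ U := closure_minimal hDU hU.isClosed
  have hhv : ∀ ξ ∈ closure D, (h ξ : EReal) ≤ worstValE U (Yx x) (fES g hv H A0 Ai B0 x) :=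
    closure_minimal (fun ξ hξ => le_worstValE_of_recourseStable hDU hDs hξ fun y hy hyD =>
      F.inf'_le _ ((hFD y).2 ⟨hy, hyD⟩))
      (isClosed_le (continuous_coe_real_ereal.comp hh) continuous_const)
  obtain ⟨ξ₁, hξ₁, hmax⟩ := (hU.of_isClosed_subset isClosed_closure hcl).exists_isMaxOn
    ⟨ξ₀, subset_closure hξ₀⟩ hh.continuousOn
  obtain ⟨G, hGF, hGcard, hG⟩ := exists_subcover_card_le_of_concaveOn
    (fun y hy => (hconc y ((hFD y).1 hy).1).subset hcl hD.closure) (v := h ξ₁) fun ξ hξ => by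
      obtain ⟨y, hy, hyξ⟩ := F.exists_mem_eq_inf' hF (g x · ξ)
      exact ⟨y, hy, hyξ ▸ hmax hξ⟩
  refine ⟨G, fun y hy => ((hFD y).1 (hGF hy)).1, by simpa using hGcard, fun ξ hξ => ?_⟩
  obtain ⟨y, hy, hyξ⟩ := hG ξ hξ
  have hfeas := closure_minimal ((hFD y).1 (hGF hy)).2 (isClosed_setOf_feasS hv H A0 Ai B0 x y) hξ
  exact ⟨y, hy, (fES_of_feasS hfeas).trans_le ((EReal.coe_le_coe_iff.2 hyξ).trans (hhv ξ₁ hξ₁))⟩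

theorem exists_policy_of_recourseStable_of_const (hS : (Yx x).Finite)
    (hx : Feasible2RO hv H A0 Ai B0 Yx U x) (hconst : ∀ y ξ ξ', g x y ξ = g x y ξ')
    (hDU : D ⊆ U) (hDs : RecourseStableS hv H A0 Ai B0 Yx x D) :
    ∃ G : Finset (Fin ny → ℝ), ↑G ⊆ Yx x ∧ G.card ≤ 1 ∧ ∀ ξ ∈ closure D,
      ∃ y ∈ G, fES g hv H A0 Ai B0 x y ξ ≤ worstValE U (Yx x) (fES g hv H A0 Ai B0 x) := by
  rcases D.eq_empty_or_nonempty with rfl | ⟨ξ₀, hξ₀⟩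
  · exact ⟨∅, by simp, by simp, by simp⟩
  obtain ⟨F, hF, hFD⟩ := exists_finset_feasible_on hS hx hDU hDs hξ₀
  obtain ⟨y₀, hy₀, hmin⟩ := F.exists_min_image (g x · ξ₀) hF
  refine ⟨{y₀}, by simpa using ((hFD y₀).1 hy₀).1, by simp,
    fun ξ hξ => ⟨y₀, mem_singleton_self _, ?_⟩⟩
  have hfeas := closure_minimal ((hFD y₀).1 hy₀).2 (isClosed_setOf_feasS hv H A0 Ai B0 x y₀) hξ
  rw [fES_of_feasS hfeas, hconst y₀ ξ ξ₀]
  exact le_worstValE_of_recourseStable hDU hDs hξ₀ fun y hy hyD => hmin y ((hFD y).2 ⟨hy, hyD⟩)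

end Selection

section Adaptability

variable {nx ny nξ m : ℕ} {g : (Fin nx → ℝ) → (Fin ny → ℝ) → (Fin nξ → ℝ) → ℝ}
  {hv : Fin m → ℤ} {H : Matrix (Fin m) (Fin nξ) ℤ} {A0 : Matrix (Fin m) (Fin nx) ℤ}
  {Ai : Fin nξ → Matrix (Fin m) (Fin nx) ℤ} {B0 : Matrix (Fin m) (Fin ny) ℤ}
  {Yx : (Fin nx → ℝ) → Set (Fin ny → ℝ)} {U : Set (Fin nξ → ℝ)} {x : Fin nx → ℝ}

theorem kValE_eq_worstValE_of_forall_region (hS : (Yx x).Finite) (hSne : (Yx x).Nonempty)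
    (hUconv : Convex ℝ U) (hUc : IsClosed U) {η ω b k : ℕ}
    (hη : Feasible2RO hv H A0 Ai B0 Yx U x → (HypSet hv H A0 Ai B0 Yx U x).ncard ≤ η)
    (hω : (matA H Ai x).rank ≤ ω)
    (hk : min (Yx x).ncard (b * ∑ i ∈ Finset.range (ω + 1), Nat.choose η i) ≤ k)
    (hsel : Feasible2RO hv H A0 Ai B0 Yx U x → ∀ D ⊆ U, Convex ℝ D →
      RecourseStableS hv H A0 Ai B0 Yx x D → ∃ G : Finset (Fin ny → ℝ), ↑G ⊆ Yx x ∧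
        G.card ≤ b ∧ ∀ ξ ∈ closure D,
          ∃ y ∈ G, fES g hv H A0 Ai B0 x y ξ ≤ worstValE U (Yx x) (fES g hv H A0 Ai B0 x)) :
    kValE U (Yx x) (fES g hv H A0 Ai B0 x) k = worstValE U (Yx x) (fES g hv H A0 Ai B0 x) := by
  classical
  obtain ⟨y₀, hy₀⟩ := hSne
  refine le_antisymm ?_ (worstValE_le_kValE k)
  rcases min_le_iff.1 hk with hk | hk
  · simpa using kValE_le_worstValE (U := U) (F := fES g hv H A0 Ai B0 x) hy₀
      (G := hS.toFinset) (by simp) (by rwa [← Set.ncard_eq_toFinset_card _ hS])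
  by_cases hx : Feasible2RO hv H A0 Ai B0 Yx U x
  swap
  · rw [worstValE_eq_top_of_not_feasible hx]
    exact le_top
  obtain ⟨R, D, hD, hcover, hR⟩ :=
    exists_recourseStable_cover hv H A0 Ai B0 Yx x hUconv hUc hS (hη hx) hω
  choose G hGS hGb hG using fun t => hsel hx (D t) (hD t).1 (hD t).2.1 (hD t).2.2
  have hGcard : (univ.biUnion G).card ≤ k :=
    calc (univ.biUnion G).card ≤ ∑ t, (G t).card := card_biUnion_le
      _ ≤ R * b := by simpa using sum_le_card_nsmul univ (fun t => (G t).card) b fun t _ => hGb t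
      _ ≤ b * ∑ i ∈ Finset.range (ω + 1), Nat.choose η i := by
        rw [mul_comm]
        exact Nat.mul_le_mul_left b hR
      _ ≤ k := hk
  refine (kValE_le_worstValE hy₀ (fun y hy => ?_) hGcard).trans
    (worstValE_le_of_forall_exists fun ξ hξ => ?_)
  · obtain ⟨t, -, hyt⟩ := mem_biUnion.1 hy
    exact hGS t hyt
  · rw [← hcover] at hξ
    obtain ⟨t, ht⟩ := Set.mem_iUnion.1 hξ
    obtain ⟨y, hy, hyv⟩ := hG t ξ ht
    exact ⟨y, mem_biUnion.2 ⟨t, mem_univ t, hy⟩, hyv⟩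

end Adaptability

theorem stmt_12_general (nx ny nξ m : ℕ)
    (X : Set (Fin nx → ℝ))
    (Y : Set (Fin ny → ℝ)) (hYfin : Y.Finite)
    (Yx : (Fin nx → ℝ) → Set (Fin ny → ℝ))
    (hYxsub : ∀ x ∈ X, Yx x ⊆ Y) (hYxne : ∀ x ∈ X, (Yx x).Nonempty)
    (U : Set (Fin nξ → ℝ)) (hUcomp : IsCompact U) (hUconv : Convex ℝ U)
    (g : (Fin nx → ℝ) → (Fin ny → ℝ) → (Fin nξ → ℝ) → ℝ)
    (hgcont : Continuous fun p : (Fin nx → ℝ) × (Fin ny → ℝ) × (Fin nξ → ℝ) =>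
      g p.1 p.2.1 p.2.2)
    (hgconc : ∀ x ∈ X, ∀ y ∈ Y, ConcaveOn ℝ U (g x y))
    (hv : Fin m → ℤ) (H : Matrix (Fin m) (Fin nξ) ℤ)
    (A0 : Matrix (Fin m) (Fin nx) ℤ) (Ai : Fin nξ → Matrix (Fin m) (Fin nx) ℤ)
    (B0 : Matrix (Fin m) (Fin ny) ℤ)
    (η : ℕ)
    (hηb : ∀ x ∈ X, Feasible2RO hv H A0 Ai B0 Yx U x →
      (HypSet hv H A0 Ai B0 Yx U x).ncard ≤ η)
    (ω : ℕ) (hω : ∀ x ∈ X, (matA H Ai x).rank ≤ ω) :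
    (∀ x ∈ X, Feasible2RO hv H A0 Ai B0 Yx U x →
      ∃ (R : ℕ) (D : Fin R → Set (Fin nξ → ℝ)),
        (∀ t, D t ⊆ U ∧ Convex ℝ (D t) ∧
          RecourseStableS hv H A0 Ai B0 Yx x (D t)) ∧
        (⋃ t, closure (D t)) = U ∧
        R ≤ ∑ i ∈ Finset.range (ω + 1), Nat.choose η i) ∧
    (∀ k : ℕ,
      min Y.ncard ((nξ + 1) * ∑ i ∈ Finset.range (ω + 1), Nat.choose η i) ≤ k →
      (⨅ x ∈ X, kValE U (Yx x) (fES g hv H A0 Ai B0 x) k) =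
        (⨅ x ∈ X, worstValE U (Yx x) (fES g hv H A0 Ai B0 x)) ∧
      (∀ x ∈ X,
        kValE U (Yx x) (fES g hv H A0 Ai B0 x) k =
          (⨅ x' ∈ X, kValE U (Yx x') (fES g hv H A0 Ai B0 x') k) ↔
        worstValE U (Yx x) (fES g hv H A0 Ai B0 x) =
          (⨅ x' ∈ X, worstValE U (Yx x') (fES g hv H A0 Ai B0 x')))) ∧
    ((∀ x y ξ ξ', g x y ξ = g x y ξ') → ∀ k : ℕ,
      min Y.ncard (∑ i ∈ Finset.range (ω + 1), Nat.choose η i) ≤ k →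
      (⨅ x ∈ X, kValE U (Yx x) (fES g hv H A0 Ai B0 x) k) =
        (⨅ x ∈ X, worstValE U (Yx x) (fES g hv H A0 Ai B0 x)) ∧
      (∀ x ∈ X,
        kValE U (Yx x) (fES g hv H A0 Ai B0 x) k =
          (⨅ x' ∈ X, kValE U (Yx x') (fES g hv H A0 Ai B0 x') k) ↔
        worstValE U (Yx x) (fES g hv H A0 Ai B0 x) =
          (⨅ x' ∈ X, worstValE U (Yx x') (fES g hv H A0 Ai B0 x')))) := by
  have hcont : ∀ x y, Continuous (g x y) := fun x y =>
    hgcont.comp (f := fun ξ => (x, y, ξ)) (by fun_prop)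
  have hS : ∀ x ∈ X, (Yx x).Finite := fun x hx => hYfin.subset (hYxsub x hx)
  have hk : ∀ x ∈ X, ∀ {b k : ℕ}, min Y.ncard b ≤ k → min (Yx x).ncard b ≤ k :=
    fun x hx b _ h => (min_le_min_right b (Set.ncard_le_ncard (hYxsub x hx) hYfin)).trans h
  refine ⟨fun x hx hxf => exists_recourseStable_cover hv H A0 Ai B0 Yx x hUconv
    hUcomp.isClosed (hS x hx) (hηb x hx hxf) (hω x hx), fun k hk' => ?_, fun hconst k hk' => ?_⟩
  · exact iInf₂_eq_and_iff_of_forall_eq fun x hx => kValE_eq_worstValE_of_forall_region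
      (hS x hx) (hYxne x hx) hUconv hUcomp.isClosed (hηb x hx) (hω x hx) (hk x hx hk')
      fun hxf _ hDU hD hDs => exists_policies_of_recourseStable (hS x hx) hxf hUcomp (hcont x)
        (fun y hy => hgconc x hx y (hYxsub x hx hy)) hDU hD hDs
  · exact iInf₂_eq_and_iff_of_forall_eq fun x hx => kValE_eq_worstValE_of_forall_region (b := 1)
      (hS x hx) (hYxne x hx) hUconv hUcomp.isClosed (hηb x hx) (hω x hx)
      (by simpa using hk x hx hk')
      fun hxf _ hDU _ hDs =>
        exists_policy_of_recourseStable_of_const (hS x hx) hxf (hconst x) hDU hDs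

/-- Under fixed recourse, with `ω` bounding the rank of `A(x)` over `X`
(`ω ≤ min{m, n_ξ}`): for every feasible `x` there is a cover of `U` by the closures of at most
`Σ_{i=0}^{ω} C(η,i)` convex recourse-stable regions; consequently
`k ≥ min{|Y|, (n_ξ+1)·Σ_{i=0}^{ω} C(η,i)}` policies suffice for `k`-adaptability to have the
two-stage robust optimal value and optimal first-stage solutions, and if `g` does not depend on
`ξ` then `k ≥ min{|Y|, Σ_{i=0}^{ω} C(η,i)}` suffices. -/
theorem stmt_12 (nx ny nξ m : ℕ) (hnx : 0 < nx) (hny : 0 < ny) (hnξ : 0 < nξ) (hm0 : 0 < m)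
    (X : Set (Fin nx → ℝ)) (hXcomp : IsCompact X) (hXne : X.Nonempty)
    (Y : Set (Fin ny → ℝ)) (hYfin : Y.Finite) (hYne : Y.Nonempty)
    (hYint : ∀ y ∈ Y, ∀ i, ∃ z : ℤ, y i = (z : ℝ))
    (Yx : (Fin nx → ℝ) → Set (Fin ny → ℝ))
    (hYxsub : ∀ x ∈ X, Yx x ⊆ Y) (hYxne : ∀ x ∈ X, (Yx x).Nonempty)
    (U : Set (Fin nξ → ℝ)) (hUcomp : IsCompact U) (hUconv : Convex ℝ U) (hUne : U.Nonempty)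
    (g : (Fin nx → ℝ) → (Fin ny → ℝ) → (Fin nξ → ℝ) → ℝ)
    (hgcont : Continuous fun p : (Fin nx → ℝ) × (Fin ny → ℝ) × (Fin nξ → ℝ) =>
      g p.1 p.2.1 p.2.2)
    (hgconc : ∀ x ∈ X, ∀ y ∈ Y, ConcaveOn ℝ U (g x y))
    (hv : Fin m → ℤ) (H : Matrix (Fin m) (Fin nξ) ℤ)
    (A0 : Matrix (Fin m) (Fin nx) ℤ) (Ai : Fin nξ → Matrix (Fin m) (Fin nx) ℤ)
    (B0 : Matrix (Fin m) (Fin ny) ℤ)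
    (hfeas : ∃ x ∈ X, Feasible2RO hv H A0 Ai B0 Yx U x)
    (η : ℕ) (hη1 : 1 ≤ η)
    (hηb : ∀ x ∈ X, Feasible2RO hv H A0 Ai B0 Yx U x →
      (HypSet hv H A0 Ai B0 Yx U x).ncard ≤ η)
    (ω : ℕ) (hω : ∀ x ∈ X, (matA H Ai x).rank ≤ ω) (hωle : ω ≤ min m nξ) :
    (∀ x ∈ X, Feasible2RO hv H A0 Ai B0 Yx U x →
      ∃ (R : ℕ) (D : Fin R → Set (Fin nξ → ℝ)),
        (∀ t, D t ⊆ U ∧ Convex ℝ (D t) ∧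
          RecourseStableS hv H A0 Ai B0 Yx x (D t)) ∧
        (⋃ t, closure (D t)) = U ∧
        R ≤ ∑ i ∈ Finset.range (ω + 1), Nat.choose η i) ∧
    (∀ k : ℕ,
      min Y.ncard ((nξ + 1) * ∑ i ∈ Finset.range (ω + 1), Nat.choose η i) ≤ k →
      (⨅ x ∈ X, kValE U (Yx x) (fES g hv H A0 Ai B0 x) k) =
        (⨅ x ∈ X, worstValE U (Yx x) (fES g hv H A0 Ai B0 x)) ∧
      (∀ x ∈ X,
        kValE U (Yx x) (fES g hv H A0 Ai B0 x) k =
          (⨅ x' ∈ X, kValE U (Yx x') (fES g hv H A0 Ai B0 x') k) ↔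
        worstValE U (Yx x) (fES g hv H A0 Ai B0 x) =
          (⨅ x' ∈ X, worstValE U (Yx x') (fES g hv H A0 Ai B0 x')))) ∧
    ((∀ x y ξ ξ', g x y ξ = g x y ξ') → ∀ k : ℕ,
      min Y.ncard (∑ i ∈ Finset.range (ω + 1), Nat.choose η i) ≤ k →
      (⨅ x ∈ X, kValE U (Yx x) (fES g hv H A0 Ai B0 x) k) =
        (⨅ x ∈ X, worstValE U (Yx x) (fES g hv H A0 Ai B0 x)) ∧
      (∀ x ∈ X,
        kValE U (Yx x) (fES g hv H A0 Ai B0 x) k =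
          (⨅ x' ∈ X, kValE U (Yx x') (fES g hv H A0 Ai B0 x') k) ↔
        worstValE U (Yx x) (fES g hv H A0 Ai B0 x) =
          (⨅ x' ∈ X, worstValE U (Yx x') (fES g hv H A0 Ai B0 x')))) :=
  stmt_12_general nx ny nξ m X Y hYfin Yx hYxsub hYxne U hUcomp hUconv g hgcont hgconc hv H A0 Ai B0
    η hηb ω hω
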